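/- For a positive componentwise solution of the unforced (f = 0) tree dyadic model, the energy flux through generation n+1 is controlled by the initial energy up to generation n: 2 ∫₀^∞ Σ_{|k| = n+1} c_k X_{k̄}²(s) X_k(s) ds ≤ Σ_{|j| ≤ n} X_j(0)², for every n ≥ 0. -/

import Mathlib

/-!
Differentiating the truncated energy `E_n = ∑_{|j| ≤ n} X_j²` along the equation, each flux term
`c_k X_{k̄}² X_k` with `|k| ≤ n` occurs twice with opposite signs (gained by `k`, lost by its
parent `k̄`), so only the flux `Φ` through generation `n + 1` survives:
`E_n' = -2ν ∑_{|j| ≤ n} d_j X_j² - 2Φ ≤ -2Φ`.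
Integrating over `[0, T]` and using `E_n(T) ≥ 0` gives `2 ∫₀ᵀ Φ ≤ E_n(0)`, and `T → ∞` gives the
claim.
-/

open MeasureTheory Set Filter

theorem Set.Finite.tsum_subtype_eq_sum {β : Type*} {s : Set β} (hs : s.Finite) (f : β → ℝ) :
    ∑' x : s, f x = ∑ x ∈ hs.toFinset, f x := by
  rw [← Finset.tsum_subtype' hs.toFinset f, hs.coe_toFinset]

section EnergyInequality

variable {E E' Φ : ℝ → ℝ} {a : ℝ}

theorem intervalIntegral_le_sub_of_hasDerivAt_le (hE : ∀ t, a ≤ t → HasDerivAt E (E' t) t)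
    (hΦ : ContinuousOn Φ (Ici a)) (hE' : ∀ t, a < t → E' t ≤ -Φ t) {T : ℝ} (hT : a ≤ T) :
    ∫ t in a..T, Φ t ≤ E a - E T := by
  have hEΦ := intervalIntegral.sub_le_integral_of_hasDeriv_right_of_le (φ := fun t => -Φ t) hT
    (fun t ht => (hE t ht.1).continuousAt.continuousWithinAt)
    (fun t ht => (hE t ht.1.le).hasDerivWithinAt)
    ((hΦ.mono Icc_subset_Ici_self).integrableOn_compact isCompact_Icc).neg
    (fun t ht => hE' t ht.1)
  rw [intervalIntegral.integral_neg] at hEΦ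
  linarith

theorem setIntegral_Ioi_le_of_hasDerivAt_le (hE : ∀ t, a ≤ t → HasDerivAt E (E' t) t)
    (hΦ : ContinuousOn Φ (Ici a)) (hE' : ∀ t, a < t → E' t ≤ -Φ t)
    (hE_nonneg : ∀ t, a ≤ t → 0 ≤ E t) :
    ∫ t in Ioi a, Φ t ≤ E a := by
  by_cases hint : IntegrableOn Φ (Ioi a)
  · refine le_of_tendsto (intervalIntegral_tendsto_integral_Ioi a hint tendsto_id) ?_
    filter_upwards [eventually_ge_atTop a] with T hT
    exact (intervalIntegral_le_sub_of_hasDerivAt_le hE hΦ hE' hT).trans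
      (by linarith [hE_nonneg T hT])
  · rw [integral_undef hint]
    exact hE_nonneg a le_rfl

end EnergyInequality

section Tree

variable {J : Type*} {root : J} {parent : J → J} {gen : J → ℕ}

theorem eq_root_of_gen_eq_zero (hgen : ∀ j, j ≠ root → gen j = gen (parent j) + 1) {j : J}
    (hj : gen j = 0) : j = root := by
  by_contra hne
  rw [hgen j hne] at hj
  exact Nat.succ_ne_zero _ hj

theorem finite_setOf_gen_le (hgen_root : gen root = 0)
    (hgen : ∀ j, j ≠ root → gen j = gen (parent j) + 1)
    (hfin : ∀ j, {k | parent k = j ∧ k ≠ root}.Finite) (n : ℕ) :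
    {j | gen j ≤ n}.Finite := by
  induction n with
  | zero =>
    exact (finite_singleton root).subset fun j hj =>
      eq_root_of_gen_eq_zero hgen (Nat.le_zero.mp hj)
  | succ n ih =>
    refine (ih.union (ih.biUnion fun i _ => hfin i)).subset fun j (hj : gen j ≤ n + 1) => ?_
    by_cases hjn : gen j ≤ n
    · exact Or.inl hjn
    · have hne : j ≠ root := by rintro rfl; omega
      have := hgen j hne
      exact Or.inr (mem_biUnion (show gen (parent j) ≤ n by omega) ⟨rfl, hne⟩)

theorem sum_sum_children_eq [DecidableEq J] (hgen_root : gen root = 0)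
    (hgen : ∀ j, j ≠ root → gen j = gen (parent j) + 1) {n : ℕ} {A L : Finset J}
    {C : J → Finset J} (hA : ∀ j, j ∈ A ↔ gen j ≤ n) (hL : ∀ k, k ∈ L ↔ gen k = n + 1)
    (hC : ∀ j k, k ∈ C j ↔ parent k = j ∧ k ≠ root) {M : Type*} [AddCommMonoid M]
    (g : J → M) :
    ∑ j ∈ A, ∑ k ∈ C j, g k = ∑ j ∈ A with j ≠ root, g j + ∑ k ∈ L, g k := by
  have hC_disj : (A : Set J).PairwiseDisjoint C := fun j₁ _ j₂ _ hne =>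
    Finset.disjoint_left.2 fun k h₁ h₂ => hne (((hC _ _).1 h₁).1.symm.trans ((hC _ _).1 h₂).1)
  have hL_disj : Disjoint {j ∈ A | j ≠ root} L :=
    Finset.disjoint_left.2 fun k hk hkL => by
      have := (hA k).1 (Finset.mem_filter.1 hk).1
      have := (hL k).1 hkL
      omega
  have hunion : A.biUnion C = {j ∈ A | j ≠ root} ∪ L := by
    ext k
    simp only [Finset.mem_biUnion, Finset.mem_union, Finset.mem_filter, hA, hL, hC]
    constructor
    · rintro ⟨j, hj, rfl, hk⟩
      have := hgen k hk
      by_cases hkn : gen k ≤ n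
      · exact Or.inl ⟨hkn, hk⟩
      · exact Or.inr (by omega)
    · rintro (⟨hkn, hk⟩ | hkn)
      · have := hgen k hk
        exact ⟨parent k, by omega, rfl, hk⟩
      · have hk : k ≠ root := by rintro rfl; omega
        have := hgen k hk
        exact ⟨parent k, by omega, rfl, hk⟩
  rw [← Finset.sum_biUnion hC_disj, hunion, Finset.sum_union hL_disj]

end Tree

section Dyadic

variable {J : Type*} [DecidableEq J] {root : J} {parent : J → J} {gen : J → ℕ}
  {X : J → ℝ → ℝ} {c d : J → ℝ} {ν t : ℝ}

theorem hasDerivAt_sq_of_hasDerivAt_dyadic {j : J}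
    (hfin : {k | parent k = j ∧ k ≠ root}.Finite)
    (hX : HasDerivAt (X j)
      (-ν * d j * X j t + c j * (if j = root then 0 else X (parent j) t) ^ 2
        - ∑' k : {k | parent k = j ∧ k ≠ root}, c k * X j t * X k t) t) :
    HasDerivAt (fun s => X j s ^ 2)
      (-(2 * ν * d j * X j t ^ 2) + 2 * ((if j = root then 0 else c j * X (parent j) t ^ 2 * X j t)
        - ∑ k ∈ hfin.toFinset, c k * X (parent k) t ^ 2 * X k t)) t := by
  rw [hfin.tsum_subtype_eq_sum (fun k => c k * X j t * X k t)] at hX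
  have hchildren : ∑ k ∈ hfin.toFinset, c k * X (parent k) t ^ 2 * X k t
      = X j t * ∑ k ∈ hfin.toFinset, c k * X j t * X k t := by
    rw [Finset.mul_sum]
    refine Finset.sum_congr rfl fun k hk => ?_
    rw [(hfin.mem_toFinset.1 hk).1]
    ring
  refine (hX.pow 2).congr_deriv ?_
  rw [hchildren]
  split_ifs <;> push_cast <;> ring

theorem hasDerivAt_sum_sq_of_hasDerivAt_dyadic (hgen_root : gen root = 0)
    (hgen : ∀ j, j ≠ root → gen j = gen (parent j) + 1)
    (hfin : ∀ j, {k | parent k = j ∧ k ≠ root}.Finite) {n : ℕ} {A L : Finset J}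
    (hA : ∀ j, j ∈ A ↔ gen j ≤ n) (hL : ∀ k, k ∈ L ↔ gen k = n + 1)
    (hX : ∀ j ∈ A, HasDerivAt (X j)
      (-ν * d j * X j t + c j * (if j = root then 0 else X (parent j) t) ^ 2
        - ∑' k : {k | parent k = j ∧ k ≠ root}, c k * X j t * X k t) t) :
    HasDerivAt (fun s => ∑ j ∈ A, X j s ^ 2)
      (-(∑ j ∈ A, 2 * ν * d j * X j t ^ 2)
        - 2 * ∑ k ∈ L, c k * X (parent k) t ^ 2 * X k t) t := by
  refine (HasDerivAt.fun_sum fun j hj =>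
    hasDerivAt_sq_of_hasDerivAt_dyadic (hfin j) (hX j hj)).congr_deriv ?_
  rw [Finset.sum_add_distrib, ← Finset.mul_sum, Finset.sum_sub_distrib,
    sum_sum_children_eq hgen_root hgen hA hL (fun j k => (hfin j).mem_toFinset)
      (fun k => c k * X (parent k) t ^ 2 * X k t), Finset.sum_ite, Finset.sum_neg_distrib]
  simp only [Finset.sum_const_zero, zero_add, ne_eq, sub_add_cancel_left, mul_neg]
  ring

end Dyadic

theorem tree_dyadic_flux_inequality_general
    (J : Type) [DecidableEq J] (root : J) (parent : J → J) (gen : J → ℕ)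
    (hgen_root : gen root = 0)
    (hgen : ∀ j : J, j ≠ root → gen j = gen (parent j) + 1)
    (hfin : ∀ j : J, {k : J | parent k = j ∧ k ≠ root}.Finite)
    (α γ ν : ℝ) (hν : 0 ≤ ν)
    (X : J → ℝ → ℝ)
    (hsol : ∀ j : J, ∀ t : ℝ, 0 ≤ t →
      HasDerivAt (X j)
        (-ν * (2:ℝ) ^ (γ * (gen j : ℝ)) * X j t
          + (2:ℝ) ^ (α * (gen j : ℝ)) * (if j = root then 0 else X (parent j) t) ^ 2
          - ∑' k : {k : J | parent k = j ∧ k ≠ root},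
              (2:ℝ) ^ (α * (gen (k : J) : ℝ)) * X j t * X (k : J) t) t) :
    ∀ n : ℕ,
      2 * ∫ s in Set.Ioi (0:ℝ),
          ∑' k : {k : J | gen k = n + 1},
            (2:ℝ) ^ (α * (gen (k : J) : ℝ)) * (X (parent (k : J)) s) ^ 2 * X (k : J) s
        ≤ ∑' j : {j : J | gen j ≤ n}, (X (j : J) 0) ^ 2 := by
  intro n
  have hlev := finite_setOf_gen_le hgen_root hgen hfin
  have hnext : {k | gen k = n + 1}.Finite := (hlev (n + 1)).subset fun k hk => hk.le
  have hcont : ∀ j, ContinuousOn (X j) (Ici 0) := fun j t ht =>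
    (hsol j t ht).continuousAt.continuousWithinAt
  simp_rw [(hlev n).tsum_subtype_eq_sum (fun j => X j 0 ^ 2), ← integral_const_mul,
    fun s => hnext.tsum_subtype_eq_sum fun k => (2:ℝ) ^ (α * gen k) * X (parent k) s ^ 2 * X k s]
  refine setIntegral_Ioi_le_of_hasDerivAt_le
    (fun t ht => hasDerivAt_sum_sq_of_hasDerivAt_dyadic hgen_root hgen hfin
      (fun j => (hlev n).mem_toFinset) (fun k => hnext.mem_toFinset) fun j _ => hsol j t ht)
    ?_ (fun t _ => ?_) (fun t _ => Finset.sum_nonneg fun j _ => sq_nonneg _)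
  · fun_prop
  · have hdissipation :
        0 ≤ ∑ j ∈ (hlev n).toFinset, 2 * ν * (2:ℝ) ^ (γ * (gen j : ℝ)) * X j t ^ 2 :=
      Finset.sum_nonneg fun j _ => by positivity
    linarith

theorem tree_dyadic_flux_inequality
    (J : Type) [DecidableEq J] (root : J) (parent : J → J) (gen : J → ℕ)
    (hgen_root : gen root = 0)
    (hparent_root : parent root = root)
    (hgen : ∀ j : J, j ≠ root → gen j = gen (parent j) + 1)
    (hfin : ∀ j : J, {k : J | parent k = j ∧ k ≠ root}.Finite)
    (α γ ν : ℝ) (hα : 0 < α) (hγ : 0 < γ) (hν : 0 ≤ ν)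
    (X : J → ℝ → ℝ)
    (hsol : ∀ j : J, ∀ t : ℝ, 0 ≤ t →
      HasDerivAt (X j)
        (-ν * (2:ℝ) ^ (γ * (gen j : ℝ)) * X j t
          + (2:ℝ) ^ (α * (gen j : ℝ)) * (if j = root then 0 else X (parent j) t) ^ 2
          - ∑' k : {k : J | parent k = j ∧ k ≠ root},
              (2:ℝ) ^ (α * (gen (k : J) : ℝ)) * X j t * X (k : J) t) t)
    (hpos : ∀ j : J, ∀ t : ℝ, 0 ≤ t → 0 ≤ X j t)
    (hl2 : ∀ t : ℝ, 0 ≤ t → Summable (fun j : J => (X j t) ^ 2)) :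
    ∀ n : ℕ,
      2 * ∫ s in Set.Ioi (0:ℝ),
          ∑' k : {k : J | gen k = n + 1},
            (2:ℝ) ^ (α * (gen (k : J) : ℝ)) * (X (parent (k : J)) s) ^ 2 * X (k : J) s
        ≤ ∑' j : {j : J | gen j ≤ n}, (X (j : J) 0) ^ 2 :=
  tree_dyadic_flux_inequality_general J root parent gen hgen_root hgen hfin α γ ν hν X hsol
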